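/- arXiv:2402.11116 — 2 statements merged into one kernel-verified Lean document; each statement's English description precedes it below -/
import Mathlib

section
/- Let V be a real vector space, let Σ : V × V → ℝ be a symmetric positive definite bilinear form, and let M : V × V → ℝ be a symmetric positive semidefinite bilinear form. If F, G ∈ V are linearly independent and in addition M(F,F) > 0 or M(G,G) > 0, then K(F,G) := Σ(F,F)·M(G,G) − 2·Σ(F,G)·M(F,G) + Σ(G,G)·M(F,F) > 0. -/
/-!
With `a = Σ(F,F)`, `b = Σ(F,G)`, `c = Σ(G,G)` one has the identity
`a · K(F,G) = M(aG - bF, aG - bF) + (ac - b²) · M(F,F)`.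
The first term is nonnegative, and `ac - b² > 0` is the strict Cauchy–Schwarz inequality for the
positive definite form `Σ` on the independent pair `F, G`; so `K(F,G) > 0` when `M(F,F) > 0`.
Since `K` is symmetric in `F` and `G`, the case `M(G,G) > 0` follows by swapping them.
-/

namespace LinearMap.BilinForm

variable {R V : Type*} [CommRing R] [AddCommGroup V] [Module R V]

def kulkarniNomizuSectional (S M : LinearMap.BilinForm R V) (F G : V) : R :=
  S F F * M G G - 2 * S F G * M F G + S G G * M F F

theorem kulkarniNomizuSectional_comm {S M : LinearMap.BilinForm R V} (hS : S.IsSymm)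
    (hM : M.IsSymm) (F G : V) : S.kulkarniNomizuSectional M F G = S.kulkarniNomizuSectional M G F := by
  rw [kulkarniNomizuSectional, kulkarniNomizuSectional, hS.eq G F, hM.eq G F]
  ring

theorem apply_self_mul_kulkarniNomizuSectional {S M : LinearMap.BilinForm R V} (hM : M.IsSymm)
    (F G : V) :
    S F F * S.kulkarniNomizuSectional M F G =
      M (S F F • G - S F G • F) (S F F • G - S F G • F) +
        (S F F * S G G - S F G ^ 2) * M F F := by
  simp only [kulkarniNomizuSectional, map_sub, map_smul, LinearMap.sub_apply,
    LinearMap.smul_apply, smul_eq_mul, hM.eq G F]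
  ring

section Ordered

variable [LinearOrder R] [IsStrictOrderedRing R] [Module.IsTorsionFree R V]

theorem kulkarniNomizuSectional_pos_of_left {S M : LinearMap.BilinForm R V} (hS : S.IsSymm)
    (hSpd : ∀ x, x ≠ 0 → 0 < S x x) (hM : M.IsPosSemidef) {F G : V}
    (hFG : LinearIndependent R ![F, G]) (hF : 0 < M F F) :
    0 < S.kulkarniNomizuSectional M F G := by
  have hSF : 0 < S F F := hSpd F (by simpa using hFG.ne_zero 0)
  have hCS : S F G ^ 2 < S F F * S G G :=
    (S.apply_sq_lt_iff_linearIndependent_of_symm hSpd (isSymm_iff.1 hS) F G).2 hFG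
  refine pos_of_mul_pos_right ?_ hSF.le
  rw [apply_self_mul_kulkarniNomizuSectional hM.isSymm]
  exact add_pos_of_nonneg_of_pos (hM.nonneg _) (mul_pos (sub_pos.2 hCS) hF)

theorem kulkarniNomizuSectional_pos {S M : LinearMap.BilinForm R V} (hS : S.IsSymm)
    (hSpd : ∀ x, x ≠ 0 → 0 < S x x) (hM : M.IsPosSemidef) {F G : V}
    (hFG : LinearIndependent R ![F, G]) (hMFG : 0 < M F F ∨ 0 < M G G) :
    0 < S.kulkarniNomizuSectional M F G := by
  rcases hMFG with hF | hG
  · exact kulkarniNomizuSectional_pos_of_left hS hSpd hM hFG hF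
  · rw [kulkarniNomizuSectional_comm hS hM.isSymm]
    exact kulkarniNomizuSectional_pos_of_left hS hSpd hM (LinearIndependent.pair_symm_iff.1 hFG) hG

end Ordered

end LinearMap.BilinForm

/-- For a symmetric positive definite bilinear form `S` (Σ) and a symmetric
positive semidefinite bilinear form `M` on a real vector space `V`, if `F, G` are linearly
independent and moreover `M(F,F) > 0` or `M(G,G) > 0`, then the Kulkarni–Nomizu sectional
expression `K(F,G) = Σ(F,F)·M(G,G) − 2·Σ(F,G)·M(F,G) + Σ(G,G)·M(F,F)` is strictly positive. -/
theorem kulkarni_nomizu_sectional_pos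
    (V : Type*) [AddCommGroup V] [Module ℝ V]
    (S M : V →ₗ[ℝ] V →ₗ[ℝ] ℝ)
    (hSsymm : ∀ x y : V, S x y = S y x)
    (hMsymm : ∀ x y : V, M x y = M y x)
    (hSpd : ∀ x : V, x ≠ 0 → 0 < S x x)
    (hMpsd : ∀ x : V, 0 ≤ M x x)
    (F G : V) (hFG : LinearIndependent ℝ ![F, G])
    (hM : 0 < M F F ∨ 0 < M G G) :
    0 < S F F * M G G - 2 * S F G * M F G + S G G * M F F :=
  LinearMap.BilinForm.kulkarniNomizuSectional_pos ⟨hSsymm⟩ hSpd ⟨⟨hMsymm⟩, ⟨hMpsd⟩⟩ hFG hM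
end

section
/- Let V be a real vector space and let Σ, M : V × V → ℝ be symmetric positive definite bilinear forms. Then for F, G ∈ V, the sectional expression K(F,G) := Σ(F,F)·M(G,G) − 2·Σ(F,G)·M(F,G) + Σ(G,G)·M(F,F) equals zero if and only if F and G are linearly dependent. -/
/-!
`K(F, G)` is the value of the Kulkarni–Nomizu product of `Σ` and `M` on the bivector `F ∧ G`,
so it is unchanged when `F` is replaced by `F + t G`. If `G ≠ 0`, choosing `t` so that
`F' = F - t G` is `Σ`-orthogonal to `G` turns `K(F, G)` into `Σ(F',F') M(G,G) + Σ(G,G) M(F',F')`,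
which is positive unless `F' = 0`.
-/

section

variable {R V : Type*} [CommRing R] [AddCommGroup V] [Module R V]

def kulkarniNomizuSectional (S M : V →ₗ[R] V →ₗ[R] R) (F G : V) : R :=
  S F F * M G G - 2 * S F G * M F G + S G G * M F F

variable {S M : V →ₗ[R] V →ₗ[R] R}

theorem kulkarniNomizuSectional_zero_right (F : V) : kulkarniNomizuSectional S M F 0 = 0 := by
  simp [kulkarniNomizuSectional]

theorem kulkarniNomizuSectional_add_smul_right (hS : ∀ x y, S x y = S y x)
    (hM : ∀ x y, M x y = M y x) (F G : V) (t : R) :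
    kulkarniNomizuSectional S M (F + t • G) G = kulkarniNomizuSectional S M F G := by
  simp only [kulkarniNomizuSectional, map_add, map_smul, LinearMap.add_apply,
    LinearMap.smul_apply, smul_eq_mul, hS G F, hM G F]
  ring

theorem kulkarniNomizuSectional_smul_left_self (hS : ∀ x y, S x y = S y x)
    (hM : ∀ x y, M x y = M y x) (G : V) (t : R) :
    kulkarniNomizuSectional S M (t • G) G = 0 := by
  simpa [kulkarniNomizuSectional] using kulkarniNomizuSectional_add_smul_right hS hM 0 G t

end

theorem kulkarniNomizuSectional_pos {R V : Type*} [Field R] [LinearOrder R]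
    [IsStrictOrderedRing R] [AddCommGroup V] [Module R V] {S M : V →ₗ[R] V →ₗ[R] R}
    (hS : ∀ x y, S x y = S y x) (hM : ∀ x y, M x y = M y x)
    (hSpos : ∀ x, x ≠ 0 → 0 < S x x) (hMpos : ∀ x, x ≠ 0 → 0 < M x x) {F G : V}
    (hG : G ≠ 0) (hFG : ∀ a : R, a • G ≠ F) :
    0 < kulkarniNomizuSectional S M F G := by
  set t := S F G / S G G
  set F' := F - t • G
  have hF' : F' ≠ 0 := sub_ne_zero.mpr (hFG t).symm
  have horth : S F' G = 0 := by
    simp only [F', t, map_sub, map_smul, LinearMap.sub_apply, LinearMap.smul_apply, smul_eq_mul]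
    rw [div_mul_cancel₀ _ (hSpos G hG).ne', sub_self]
  have hK : kulkarniNomizuSectional S M F G = S F' F' * M G G + S G G * M F' F' := by
    have hshift := kulkarniNomizuSectional_add_smul_right hS hM F' G t
    rw [sub_add_cancel] at hshift
    rw [hshift, kulkarniNomizuSectional, horth]
    ring
  rw [hK]
  exact add_pos (mul_pos (hSpos F' hF') (hMpos G hG)) (mul_pos (hSpos G hG) (hMpos F' hF'))

/-- For symmetric positive definite bilinear forms `S` (Σ) and `M` on a real
vector space `V`, the Kulkarni–Nomizu sectional expression
`K(F,G) = Σ(F,F)·M(G,G) − 2·Σ(F,G)·M(F,G) + Σ(G,G)·M(F,F)` vanishes if and only if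
`F` and `G` are linearly dependent. -/
theorem kulkarni_nomizu_sectional_eq_zero_iff
    (V : Type*) [AddCommGroup V] [Module ℝ V]
    (S M : V →ₗ[ℝ] V →ₗ[ℝ] ℝ)
    (hSsymm : ∀ x y : V, S x y = S y x)
    (hMsymm : ∀ x y : V, M x y = M y x)
    (hSpd : ∀ x : V, x ≠ 0 → 0 < S x x)
    (hMpd : ∀ x : V, x ≠ 0 → 0 < M x x)
    (F G : V) :
    S F F * M G G - 2 * S F G * M F G + S G G * M F F = 0 ↔
      ¬ LinearIndependent ℝ ![F, G] := by
  change kulkarniNomizuSectional S M F G = 0 ↔ _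
  rw [linearIndependent_fin2]
  simp only [Matrix.cons_val_one, Matrix.cons_val_zero, not_and_or, not_forall, not_not]
  constructor
  · intro hK
    by_contra! h
    exact (kulkarniNomizuSectional_pos hSsymm hMsymm hSpd hMpd h.1 h.2).ne' hK
  · rintro (rfl | ⟨a, rfl⟩)
    · exact kulkarniNomizuSectional_zero_right F
    · exact kulkarniNomizuSectional_smul_left_self hSsymm hMsymm G a
end
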